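/- Let f ∈ ℝ[X,Y] be a nonzero polynomial in two variables that is divisible neither by X nor by Y, let a, b, c be natural numbers, and let ε ∈ {−1, +1}. Suppose that for all x, y ∈ ℝ with x·y·(x+y) ≠ 0 one has f(x,y)/(xᵃ yᵇ (x+y)ᶜ) = ε · f(y,x)/(yᵃ xᵇ (x+y)ᶜ). Then a = b. -/

import Mathlib

/-- Evaluation of a two-variable real polynomial at `(x, y)`. -/
noncomputable def ev (f : MvPolynomial (Fin 2) ℝ) (x y : ℝ) : ℝ :=
  MvPolynomial.eval ![x, y] f

/-! Clearing denominators turns the hypothesis into the polynomial identity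
`f(X, Y) · Yᵃ Xᵇ = ε · f(Y, X) · Xᵃ Yᵇ`.  If `a < b`, cancelling `Xᵃ Yᵃ` leaves
`f · Xᵇ⁻ᵃ = ε · f(Y, X) · Yᵇ⁻ᵃ`, so the prime `Y` divides `f · Xᵇ⁻ᵃ` and hence `f`;
symmetrically `a > b` forces `X ∣ f`. -/

namespace MvPolynomial

variable {σ R : Type*} [CommRing R] [IsDomain R]

theorem eq_of_eval_eq_of_eval_ne_zero [Infinite R] {p q r : MvPolynomial σ R} (hr : r ≠ 0)
    (h : ∀ v, eval v r ≠ 0 → eval v p = eval v q) : p = q := by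
  refine mul_right_cancel₀ hr (MvPolynomial.funext fun v => ?_)
  by_cases hv : eval v r = 0
  · simp only [map_mul, hv, mul_zero]
  · simp only [map_mul, h v hv]

theorem X_dvd_of_mul_X_pow_eq_mul_X_pow {i j : σ} (hij : i ≠ j) {p q : MvPolynomial σ R}
    {m n : ℕ} (hmn : m < n) (h : p * X j ^ m * X i ^ n = q * X i ^ m * X j ^ n) :
    X j ∣ p := by
  obtain ⟨k, rfl⟩ := Nat.exists_eq_add_of_lt hmn
  have hcancel : p * X i ^ (k + 1) = q * X j ^ (k + 1) := by
    refine mul_right_cancel₀ (pow_ne_zero m (mul_ne_zero (X_ne_zero i) (X_ne_zero j))) ?_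
    linear_combination h
  have hdvd : X j ∣ p * X i ^ (k + 1) := hcancel ▸ (dvd_pow_self _ k.succ_ne_zero).mul_left q
  refine (X_prime.dvd_or_dvd hdvd).resolve_right fun hXi => ?_
  exact hij (X_dvd_X.mp (X_prime.dvd_of_dvd_pow hXi)).symm

end MvPolynomial

open MvPolynomial

theorem ev_rename_swap (f : MvPolynomial (Fin 2) ℝ) (x y : ℝ) :
    ev (rename (Equiv.swap 0 1) f) x y = ev f y x := by
  have hswap : ![x, y] ∘ Equiv.swap (0 : Fin 2) 1 = ![y, x] := by
    funext i
    fin_cases i <;> rfl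
  rw [ev, eval_rename, hswap, ev]

theorem eval_eq_ev (f : MvPolynomial (Fin 2) ℝ) (v : Fin 2 → ℝ) : eval v f = ev f (v 0) (v 1) :=
  congrArg (eval · f) (by funext i; fin_cases i <;> rfl)

theorem stmt_9_general (f : MvPolynomial (Fin 2) ℝ) (a b c : ℕ) (ε : ℝ)
    (hX : ¬ (MvPolynomial.X 0 ∣ f))
    (hY : ¬ (MvPolynomial.X 1 ∣ f))
    (h : ∀ x y : ℝ, x * y * (x + y) ≠ 0 →
      ev f x y / (x ^ a * y ^ b * (x + y) ^ c) =
        ε * (ev f y x / (y ^ a * x ^ b * (x + y) ^ c))) :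
    a = b := by
  set g := rename (Equiv.swap (0 : Fin 2) 1) f
  have key : f * X 1 ^ a * X 0 ^ b = C ε * g * X 0 ^ a * X 1 ^ b := by
    refine eq_of_eval_eq_of_eval_ne_zero (r := X 0 * X 1 * (X 0 + X 1)) ?_ fun v hv => ?_
    · exact ne_of_apply_ne (eval 1) (by norm_num)
    · simp only [map_mul, map_add, map_pow, eval_X, eval_C, eval_eq_ev, g, ev_rename_swap] at hv ⊢
      obtain ⟨⟨hx, hy⟩, hs⟩ := mul_ne_zero_iff.mp hv |>.imp_left mul_ne_zero_iff.mp
      have hquot := h (v 0) (v 1) hv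
      rw [mul_div_assoc', div_eq_div_iff (by positivity) (by positivity)] at hquot
      refine mul_right_cancel₀ (pow_ne_zero c hs) ?_
      linear_combination hquot
  rcases lt_trichotomy a b with hab | rfl | hab
  · exact absurd (X_dvd_of_mul_X_pow_eq_mul_X_pow zero_ne_one hab key) hY
  · rfl
  · refine absurd (X_dvd_of_mul_X_pow_eq_mul_X_pow (q := C ε * g) one_ne_zero hab ?_) hX
    linear_combination key

theorem stmt_9 (f : MvPolynomial (Fin 2) ℝ) (a b c : ℕ) (ε : ℝ)
    (hf : f ≠ 0)
    (hX : ¬ (MvPolynomial.X 0 ∣ f))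
    (hY : ¬ (MvPolynomial.X 1 ∣ f))
    (hε : ε = -1 ∨ ε = 1)
    (h : ∀ x y : ℝ, x * y * (x + y) ≠ 0 →
      ev f x y / (x ^ a * y ^ b * (x + y) ^ c) =
        ε * (ev f y x / (y ^ a * x ^ b * (x + y) ^ c))) :
    a = b :=
  stmt_9_general f a b c ε hX hY h
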